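/- arXiv:2211.14820 — 4 statements merged into one kernel-verified Lean document; each statement's English description precedes it below -/
import Mathlib

section
/- Let α > 0, K ≥ 2^{3+α}/α, and m_i, m_j > 0. For any real angle φ with 0 < |φ| < 2π (φ = θ_j - θ_i), the quantity m_i m_j [ -α(1 + α cos²(φ/2)) / |2 sin(φ/2)|^{α+2} + (2 - 4cos²(φ/2))/K ] is ≤ 0. -/
open Real

theorem stmt_6 (α K mi mj φ : ℝ) (hα : 0 < α) (hK : 2 ^ (3 + α) / α ≤ K)
    (hmi : 0 < mi) (hmj : 0 < mj) (hφ0 : 0 < |φ|) (hφ2 : |φ| < 2 * Real.pi) :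
    mi * mj * (-α * (1 + α * Real.cos (φ / 2) ^ 2) / |2 * Real.sin (φ / 2)| ^ (α + 2)
      + (2 - 4 * Real.cos (φ / 2) ^ 2) / K) ≤ 0 := by
  have habs := abs_lt.mp hφ2
  have hsin : Real.sin (φ / 2) ≠ 0 := by
    intro h
    have h1 : -Real.pi < φ / 2 := by linarith [habs.1]
    have h2 : φ / 2 < Real.pi := by linarith [habs.2]
    have := (Real.sin_eq_zero_iff_of_lt_of_lt h1 h2).mp h
    have : φ = 0 := by linarith
    simp [this] at hφ0
  set c := Real.cos (φ / 2) with hc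
  set s := |2 * Real.sin (φ / 2)| with hsdef
  have hs0 : 0 < s := abs_pos.mpr (by simpa using hsin)
  have hs2 : s ≤ 2 := by
    rw [hsdef, abs_mul]
    have := Real.abs_sin_le_one (φ / 2)
    simp only [abs_two]
    nlinarith
  have hP : (0:ℝ) < (2:ℝ) ^ (α + 2) := Real.rpow_pos_of_pos two_pos _
  have hsp : s ^ (α + 2) ≤ (2:ℝ) ^ (α + 2) :=
    Real.rpow_le_rpow hs0.le hs2 (by linarith)
  have hspos : 0 < s ^ (α + 2) := Real.rpow_pos_of_pos hs0 _
  have hKpos : 0 < K := lt_of_lt_of_le (div_pos (Real.rpow_pos_of_pos two_pos _) hα) hK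
  have hc2 : (0:ℝ) ≤ c ^ 2 := sq_nonneg c
  -- key1
  have key1 : -α * (1 + α * c ^ 2) / s ^ (α + 2) ≤ -α / (2:ℝ) ^ (α + 2) := by
    rw [div_le_div_iff₀ hspos hP]
    nlinarith [mul_le_mul_of_nonneg_left hsp hα.le,
      mul_nonneg (mul_nonneg (mul_nonneg hα.le hα.le) hc2) hP.le]
  -- 2^(3+α) = 2 * 2^(α+2)
  have hsplit : (2:ℝ) ^ (3 + α) = 2 * (2:ℝ) ^ (α + 2) := by
    have h3 : (3:ℝ) + α = 1 + (α + 2) := by ring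
    rw [h3, Real.rpow_add two_pos, Real.rpow_one]
  have key2 : (2 - 4 * c ^ 2) / K ≤ α / (2:ℝ) ^ (α + 2) := by
    have h1 : (2 - 4 * c ^ 2) / K ≤ 2 / K := by
      gcongr
      nlinarith
    have h2 : 2 / K ≤ α / (2:ℝ) ^ (α + 2) := by
      rw [div_le_div_iff₀ hKpos hP]
      have h3 : α * ((2:ℝ) ^ (3 + α) / α) ≤ α * K := mul_le_mul_of_nonneg_left hK hα.le
      rw [mul_div_cancel₀ _ hα.ne'] at h3
      linarith [hsplit ▸ h3]
    linarith
  have hsum : -α * (1 + α * c ^ 2) / s ^ (α + 2) + (2 - 4 * c ^ 2) / K ≤ 0 := by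
    have hz : -α / (2:ℝ) ^ (α + 2) + α / (2:ℝ) ^ (α + 2) = 0 := by ring
    linarith
  exact mul_nonpos_of_nonneg_of_nonpos (mul_pos hmi hmj).le hsum
end

section
/- For n masses on the unit circle at angles θ_1,…,θ_n, U_{-2}(m,θ) := ∑_{j<k} m_j m_k r_{jk}² = ∑_{j<k} m_j m_k (2 - 2cos(θ_j - θ_k)), and ∇_m U_{-2} = 2M·𝟙 together with ∇_θ U_{-2} = 0 hold if and only if ∑_j m_j cos θ_j = ∑_j m_j sin θ_j = 0, where M = ∑_j m_j. -/
open Real Finset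

/-- `U_{-2}(m, θ) = ∑_{j<k} m_j m_k (2 - 2 cos (θ_j - θ_k))`. -/
noncomputable def Uneg2 (n : ℕ) (m θ : Fin n → ℝ) : ℝ :=
  ∑ p ∈ Finset.univ.filter (fun p : Fin n × Fin n => p.1 < p.2),
    m p.1 * m p.2 * (2 - 2 * Real.cos (θ p.1 - θ p.2))

/-!
Symmetrising the pair sum gives the closed form `U_{-2} = M² - C² - S²`, where
`C + iS = ∑ m_j e^{iθ_j}` is the weighted centre of mass. Hence
`∂U/∂m_k = 2M - 2(C cos θ_k + S sin θ_k)` and `∂U/∂θ_k = 2 m_k (C sin θ_k - S cos θ_k)`.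
The two bracketed expressions are the coordinates of `(C, S)` in the rotated frame
`(cos θ_k, sin θ_k)`, `(sin θ_k, -cos θ_k)`, so both vanish for one `k` iff `C = S = 0`.
-/

theorem Finset.sum_sum_eq_sum_lt_add_swap {ι M : Type*} [Fintype ι] [LinearOrder ι]
    [AddCommMonoid M] (g : ι → ι → M) (hg : ∀ i, g i i = 0) :
    ∑ i, ∑ j, g i j = ∑ p ∈ univ.filter (fun p : ι × ι => p.1 < p.2), (g p.1 p.2 + g p.2 p.1) := by
  rw [sum_filter, Fintype.sum_prod_type]
  simp only [ite_add_zero, sum_add_distrib]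
  rw [sum_comm (f := fun i j => if i < j then g j i else 0), ← sum_add_distrib]
  refine sum_congr rfl fun i _ => ?_
  rw [← sum_add_distrib]
  refine sum_congr rfl fun j _ => ?_
  rcases lt_trichotomy i j with h | rfl | h
  · simp [h, h.not_gt]
  · simp [hg]
  · simp [h, h.not_gt]

theorem Fintype.sum_apply_update {ι : Type*} [Fintype ι] [DecidableEq ι] {M : Type*}
    [AddCommGroup M] {α : Type*} (f : ι → α → M) (x : ι → α) (k : ι) (t : α) :
    ∑ j, f j (Function.update x k t j) = ∑ j, f j (x j) + (f k t - f k (x k)) := by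
  simp only [Function.apply_update (fun j => f j), sum_update_of_mem (mem_univ k),
    ← add_sum_erase _ _ (mem_univ k), sdiff_singleton_eq_erase]
  abel

theorem Uneg2_eq_sq_sub_sq_sub_sq (n : ℕ) (m θ : Fin n → ℝ) :
    Uneg2 n m θ = (∑ j, m j) ^ 2 - (∑ j, m j * cos (θ j)) ^ 2 - (∑ j, m j * sin (θ j)) ^ 2 := by
  have hpair : Uneg2 n m θ = ∑ i, ∑ j, m i * m j * (1 - cos (θ i - θ j)) := by
    rw [Finset.sum_sum_eq_sum_lt_add_swap _ (by simp), Uneg2]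
    refine sum_congr rfl fun p _ => ?_
    rw [← cos_neg (θ p.2 - θ p.1), neg_sub]
    ring
  simp only [hpair, sq, sum_mul_sum, ← sum_sub_distrib, cos_sub]
  refine sum_congr rfl fun i _ => sum_congr rfl fun j _ => ?_
  ring

theorem HasDerivAt.add_sub_sq {f : ℝ → ℝ} {f' a : ℝ} (hf : HasDerivAt f f' a) (A : ℝ) :
    HasDerivAt (fun t => (A + (f t - f a)) ^ 2) (2 * A * f') a :=
  (((hf.sub_const (f a)).const_add A).fun_pow 2).congr_deriv (by simp)

section Gradient

variable {n : ℕ} (m θ : Fin n → ℝ) (k : Fin n)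

theorem hasDerivAt_Uneg2_update_mass :
    HasDerivAt (fun t => Uneg2 n (Function.update m k t) θ)
      (2 * ∑ j, m j - 2 * (∑ j, m j * cos (θ j)) * cos (θ k)
        - 2 * (∑ j, m j * sin (θ j)) * sin (θ k)) (m k) := by
  simp only [Uneg2_eq_sq_sub_sq_sub_sq, Fintype.sum_apply_update (fun _ s => s),
    Fintype.sum_apply_update (fun j s => s * cos (θ j)),
    Fintype.sum_apply_update (fun j s => s * sin (θ j))]
  have hid := hasDerivAt_id (m k)
  simpa using ((hid.add_sub_sq _).fun_sub ((hid.mul_const (cos (θ k))).add_sub_sq _)).fun_sub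
    ((hid.mul_const (sin (θ k))).add_sub_sq _)

theorem hasDerivAt_Uneg2_update_angle :
    HasDerivAt (fun t => Uneg2 n m (Function.update θ k t))
      (2 * m k * ((∑ j, m j * cos (θ j)) * sin (θ k)
        - (∑ j, m j * sin (θ j)) * cos (θ k))) (θ k) := by
  simp only [Uneg2_eq_sq_sub_sq_sub_sq, Fintype.sum_apply_update (fun j s => m j * cos s),
    Fintype.sum_apply_update (fun j s => m j * sin s)]
  refine ((((hasDerivAt_cos (θ k)).const_mul (m k)).add_sub_sq _).const_sub _ |>.fun_sub
    (((hasDerivAt_sin (θ k)).const_mul (m k)).add_sub_sq _)).congr_deriv ?_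
  ring

end Gradient

theorem stmt_8 {n : ℕ} (hn : 0 < n) (m θ : Fin n → ℝ) (hm : ∀ k, 0 < m k) :
    ((∀ k, deriv (fun t => Uneg2 n (Function.update m k t) θ) (m k)
        = 2 * ∑ j, m j) ∧
     (∀ k, deriv (fun t => Uneg2 n m (Function.update θ k t)) (θ k) = 0))
    ↔ ((∑ j, m j * Real.cos (θ j)) = 0 ∧ (∑ j, m j * Real.sin (θ j)) = 0) := by
  simp only [fun k => (hasDerivAt_Uneg2_update_mass m θ k).deriv,
    fun k => (hasDerivAt_Uneg2_update_angle m θ k).deriv]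
  set C := ∑ j, m j * cos (θ j)
  set S := ∑ j, m j * sin (θ j)
  constructor
  · rintro ⟨hmass, hangle⟩
    let k : Fin n := ⟨0, hn⟩
    have h₁ : C * cos (θ k) + S * sin (θ k) = 0 := by linarith [hmass k]
    have h₂ : C * sin (θ k) - S * cos (θ k) = 0 := by simpa [(hm k).ne'] using hangle k
    constructor
    · linear_combination cos (θ k) * h₁ + sin (θ k) * h₂ - C * sin_sq_add_cos_sq (θ k)
    · linear_combination sin (θ k) * h₁ - cos (θ k) * h₂ - S * sin_sq_add_cos_sq (θ k)
  · rintro ⟨hC, hS⟩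
    constructor <;> intro k <;> simp [hC, hS]
end

section
/- Let H be a real symmetric n×n matrix with Hm = c·𝟙 for some c ∈ ℝ and m ∈ ℝⁿ with positive entries. Swap two coordinates j ≠ k of m to obtain m'. Then ½ m'ᵀ H m' - ½ mᵀ H m = -(m_j - m_k)² H_{jk}. In particular if H_{jk} > 0 and m_j ≠ m_k, then m'ᵀ H m' < mᵀ H m. -/
/-!
Swapping the entries `j` and `k` of `m` adds `v = d • (e_k - e_j)` with `d = m j - m k`.
Since `H` is symmetric, `m'ᵀ H m' = mᵀ H m + 2 vᵀ H m + vᵀ H v`. The cross term vanishes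
because `H m` is constant and the entries of `v` sum to zero, and the zero diagonal of `H`
leaves `vᵀ H v = -2 d² H j k`.
-/

open Finset Matrix

theorem Function.update_update_swap_eq_add_single_sub_single {ι R : Type*} [DecidableEq ι]
    [AddCommGroup R] (m : ι → R) (j k : ι) :
    Function.update (Function.update m j (m k)) k (m j) =
      m + (Pi.single k (m j - m k) - Pi.single j (m j - m k)) := by
  funext i
  rcases eq_or_ne i k with rfl | hik
  · rcases eq_or_ne i j with rfl | _ <;> simp [*]
  · rcases eq_or_ne i j with rfl | hij <;> simp [*]

section

variable {ι R : Type*} [Fintype ι] [CommRing R]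

theorem Matrix.add_dotProduct_mulVec_add_of_isSymm {H : Matrix ι ι R} (hH : H.IsSymm)
    (m v : ι → R) :
    (m + v) ⬝ᵥ H *ᵥ (m + v) = m ⬝ᵥ H *ᵥ m + 2 * (v ⬝ᵥ H *ᵥ m) + v ⬝ᵥ H *ᵥ v := by
  have hsymm : m ⬝ᵥ H *ᵥ v = v ⬝ᵥ H *ᵥ m := by
    rw [dotProduct_mulVec, ← mulVec_transpose, hH.eq, dotProduct_comm]
  rw [mulVec_add, add_dotProduct, dotProduct_add, dotProduct_add, hsymm]
  ring

theorem Matrix.single_sub_single_dotProduct_const [DecidableEq ι] (j k : ι) (d c : R) :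
    (Pi.single k d - Pi.single j d) ⬝ᵥ (fun _ => c : ι → R) = 0 := by
  simp [sub_dotProduct, single_dotProduct]

theorem Matrix.single_sub_single_dotProduct_mulVec_single_sub_single [DecidableEq ι]
    (H : Matrix ι ι R) (j k : ι) (d : R) :
    (Pi.single k d - Pi.single j d) ⬝ᵥ H *ᵥ (Pi.single k d - Pi.single j d) =
      d ^ 2 * (H k k + H j j - H k j - H j k) := by
  simp only [mulVec_sub, mulVec_single, sub_dotProduct, dotProduct_sub, single_dotProduct,
    Pi.smul_apply, col_apply, op_smul_eq_mul]
  ring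

end

theorem stmt_14_general {n : ℕ} (H : Matrix (Fin n) (Fin n) ℝ) (hsymm : H.IsSymm)
    (hHdiag : ∀ i, H i i = 0)
    (c : ℝ) (m : Fin n → ℝ)
    (hHm : H.mulVec m = fun _ => c)
    (j k : Fin n) :
    let m' : Fin n → ℝ := Function.update (Function.update m j (m k)) k (m j)
    (1 / 2) * (m' ⬝ᵥ H.mulVec m') - (1 / 2) * (m ⬝ᵥ H.mulVec m)
      = -(m j - m k) ^ 2 * H j k ∧
    (0 < H j k → m j ≠ m k → m' ⬝ᵥ H.mulVec m' < m ⬝ᵥ H.mulVec m) := by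
  intro m'
  have hkj : H k j = H j k := hsymm.apply j k
  have key : m' ⬝ᵥ H *ᵥ m' = m ⬝ᵥ H *ᵥ m - 2 * (m j - m k) ^ 2 * H j k := by
    rw [show m' = _ from Function.update_update_swap_eq_add_single_sub_single m j k,
      add_dotProduct_mulVec_add_of_isSymm hsymm, hHm, single_sub_single_dotProduct_const,
      single_sub_single_dotProduct_mulVec_single_sub_single, hHdiag, hHdiag, hkj]
    ring
  refine ⟨by rw [key]; ring, fun hpos hne => ?_⟩
  have hd : 0 < (m j - m k) ^ 2 := sq_pos_of_ne_zero (sub_ne_zero.mpr hne)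
  rw [key]
  linarith [mul_pos hd hpos]

theorem stmt_14 {n : ℕ} (H : Matrix (Fin n) (Fin n) ℝ) (hsymm : H.IsSymm)
    (hHdiag : ∀ i, H i i = 0)
    (c : ℝ) (m : Fin n → ℝ) (hm : ∀ i, 0 < m i)
    (hHm : H.mulVec m = fun _ => c)
    (j k : Fin n) (hjk : j ≠ k) :
    let m' : Fin n → ℝ := Function.update (Function.update m j (m k)) k (m j)
    (1 / 2) * (m' ⬝ᵥ H.mulVec m') - (1 / 2) * (m ⬝ᵥ H.mulVec m)
      = -(m j - m k) ^ 2 * H j k ∧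
    (0 < H j k → m j ≠ m k → m' ⬝ᵥ H.mulVec m' < m ⬝ᵥ H.mulVec m) :=
  stmt_14_general H hsymm hHdiag c m hHm j k
end

section
/- Four masses m₁, m₂, m₃, m₄ > 0 located at the vertices of a square inscribed in a circle centered at the origin (q_j = e^{i(φ + jπ/2)}) form a central configuration for the potential U_α (α > 0) with center of mass at the origin if and only if m₁ = m₂ = m₃ = m₄. -/
/-!
Write `q j = e^{iφ} i^{j+1}`, so that `q (k + d) = q k * i^d` (indices mod 4). Factoring out `q k`,
the force on body `k` is `q k` times
`m (k+1) (i - 1) / √2^{α+2} - 2 m (k+2) / 2^{α+2} - m (k+3) (i + 1) / √2^{α+2}`,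
so balance at `k` means `m (k+1) = m (k+3)` (imaginary part) and fixes `λ / α` (real part).
Balance at bodies `0` and `1` gives `m 1 = m 3` and `m 0 = m 2`; equating the two real parts gives
`(m 1 - m 0) (1 / √2^{α+2} - 1 / 2^{α+2}) = 0`, hence `m 0 = m 1` as `√2 < 2`. Conversely, equal masses
balance everywhere, and their centre of mass is `0` because `∑ i^j = 0`.
-/

open Complex Finset

noncomputable def squareVertex (φ : ℝ) (j : Fin 4) : ℂ :=
  Complex.exp ((φ + ((j : ℕ) + 1) * Real.pi / 2) * Complex.I)

lemma squareVertex_eq (φ : ℝ) (j : Fin 4) :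
    squareVertex φ j = exp (φ * I) * I ^ ((j : ℕ) + 1) := by
  have harg : ((φ + ((j : ℕ) + 1) * Real.pi / 2) * I : ℂ)
      = φ * I + (((j : ℕ) + 1 : ℕ) : ℂ) * (Real.pi / 2 * I) := by
    push_cast
    ring
  rw [squareVertex, harg, exp_add, exp_nat_mul, exp_pi_div_two_mul_I]

lemma norm_squareVertex (φ : ℝ) (j : Fin 4) : ‖squareVertex φ j‖ = 1 := by
  simp [squareVertex_eq, norm_exp_ofReal_mul_I]

lemma squareVertex_add (φ : ℝ) (k d : Fin 4) :
    squareVertex φ (k + d) = squareVertex φ k * I ^ (d : ℕ) := by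
  rw [squareVertex_eq, squareVertex_eq, Fin.val_add, pow_succ, ← I_pow_eq_pow_mod]
  ring

lemma sum_squareVertex (φ : ℝ) : ∑ j, squareVertex φ j = 0 := by
  simp only [Fin.sum_univ_four, squareVertex_eq]
  simp [pow_succ]

lemma norm_I_sub_one : ‖I - 1‖ = √2 := by
  rw [sub_eq_neg_add, ← mul_one I, mul_comm, ← ofReal_one, ← ofReal_neg, norm_add_mul_I]
  norm_num

lemma norm_I_sq_sub_one : ‖I ^ 2 - 1‖ = 2 := by
  norm_num [I_sq]

lemma norm_I_cube_sub_one : ‖I ^ 3 - 1‖ = √2 := by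
  rw [I_pow_three, ← norm_conj, map_sub, map_neg, conj_I, map_one, neg_neg]
  exact norm_I_sub_one

section Force

variable (α φ : ℝ) (m : Fin 4 → ℝ)

lemma squareVertex_force_term (k d : Fin 4) :
    (m (k + d) : ℂ) * (squareVertex φ (k + d) - squareVertex φ k)
        / ((‖squareVertex φ (k + d) - squareVertex φ k‖ ^ (α + 2) : ℝ) : ℂ)
      = squareVertex φ k *
          ((m (k + d) : ℂ) * (I ^ (d : ℕ) - 1) / ((‖I ^ (d : ℕ) - 1‖ ^ (α + 2) : ℝ) : ℂ)) := by
  have hdiff : squareVertex φ (k + d) - squareVertex φ k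
      = squareVertex φ k * (I ^ (d : ℕ) - 1) := by
    rw [squareVertex_add]; ring
  rw [hdiff, norm_mul, norm_squareVertex, one_mul]
  ring

lemma squareVertex_force (k : Fin 4) :
    ∑ j ∈ univ.erase k, (m j : ℂ) * (squareVertex φ j - squareVertex φ k)
        / ((‖squareVertex φ j - squareVertex φ k‖ ^ (α + 2) : ℝ) : ℂ)
      = squareVertex φ k * (m (k + 1) * (I - 1) / (√2 ^ (α + 2) : ℝ)
          - 2 * m (k + 2) / ((2 : ℝ) ^ (α + 2) : ℝ) - m (k + 3) * (I + 1) / (√2 ^ (α + 2) : ℝ)) := by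
  rw [sum_erase _ (by simp), ← Equiv.sum_comp (Equiv.addLeft k)]
  simp only [Equiv.coe_addLeft, squareVertex_force_term, ← mul_sum, Fin.sum_univ_four,
    Fin.val_zero, Fin.val_one, Fin.val_two, show ((3 : Fin 4) : ℕ) = 3 from rfl, pow_zero,
    pow_one, sub_self, mul_zero, zero_div, zero_add, norm_I_sub_one, norm_I_sq_sub_one,
    norm_I_cube_sub_one]
  rw [I_sq, I_pow_three]
  ring

lemma squareVertex_balance_iff (k : Fin 4) (Λ : ℝ) :
    ∑ j ∈ univ.erase k, (m j : ℂ) * (squareVertex φ j - squareVertex φ k)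
        / ((‖squareVertex φ j - squareVertex φ k‖ ^ (α + 2) : ℝ) : ℂ) = -(Λ : ℂ) * squareVertex φ k
      ↔ m (k + 1) = m (k + 3)
        ∧ (m (k + 1) + m (k + 3)) / √2 ^ (α + 2) + 2 * m (k + 2) / 2 ^ (α + 2) = Λ := by
  have hq : squareVertex φ k ≠ 0 := norm_ne_zero_iff.mp (by simp [norm_squareVertex])
  have hs : √2 ^ (α + 2) ≠ 0 := (Real.rpow_pos_of_pos (by positivity) _).ne'
  rw [squareVertex_force, mul_comm _ (squareVertex φ k), mul_right_inj' hq, Complex.ext_iff]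
  simp only [Fin.isValue, sub_re, div_ofReal_re, mul_re, ofReal_re, I_re, one_re, zero_sub, mul_neg,
    mul_one, ofReal_im, sub_im, I_im, one_im, sub_zero, re_ofNat, im_ofNat, mul_zero, add_re,
    zero_add, add_im, add_zero, neg_re, div_ofReal_im, mul_im, neg_zero, zero_mul, zero_div, neg_im]
  rw [and_comm, sub_eq_zero, div_left_inj' hs, add_div, neg_div]
  exact and_congr_right fun _ => by constructor <;> intro h <;> linarith

end Force

lemma eq_of_square_balance {a b c d s t Λ : ℝ} (hs : s ≠ 0) (ht : t ≠ 0) (hst : s ≠ t)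
    (hbd : b = d) (hca : c = a) (hb : (b + d) / s + 2 * c / t = Λ)
    (hc : (c + a) / s + 2 * d / t = Λ) : a = b := by
  subst hbd hca
  have : (c - b) * (t - s) = 0 := by
    field_simp at hb hc
    linear_combination (hc - hb) / 2
  have := (mul_eq_zero.mp this).resolve_right (sub_ne_zero.mpr hst.symm)
  linarith

theorem stmt_19_general (α : ℝ) (hα : 0 < α) (φ : ℝ) (m : Fin 4 → ℝ) :
    let q : Fin 4 → ℂ := fun j =>
      Complex.exp ((φ + ((j : ℕ) + 1) * Real.pi / 2) * Complex.I)
    ((∃ lam : ℝ, ∀ k : Fin 4,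
        ∑ j ∈ Finset.univ.erase k,
          (m j : ℂ) * (q j - q k) / ((‖q j - q k‖ ^ (α + 2) : ℝ) : ℂ)
        = -(↑(lam / α) : ℂ) * q k) ∧
      (∑ j, (m j : ℂ) * q j) = 0)
    ↔ (m 0 = m 1 ∧ m 1 = m 2 ∧ m 2 = m 3) := by
  intro q
  have hst : √2 ^ (α + 2) < (2 : ℝ) ^ (α + 2) :=
    Real.rpow_lt_rpow (by positivity) (by norm_num) (by linarith)
  constructor
  · rintro ⟨⟨lam, hbal⟩, -⟩
    obtain ⟨h13, h0⟩ := (squareVertex_balance_iff α φ m 0 _).1 (hbal 0)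
    obtain ⟨h20, h1⟩ := (squareVertex_balance_iff α φ m 1 _).1 (hbal 1)
    simp only [zero_add, show (1 : Fin 4) + 1 = 2 from rfl, show (1 : Fin 4) + 2 = 3 from rfl,
      show (1 : Fin 4) + 3 = 0 from rfl] at h13 h0 h20 h1
    have h01 := eq_of_square_balance (by positivity) (by positivity) hst.ne h13 h20 h0 h1
    exact ⟨h01, by linarith, by linarith⟩
  · rintro ⟨h01, h12, h23⟩
    have hconst : ∀ j, m j = m 0 := by
      intro j; fin_cases j <;> simp [h01, h12, h23]
    refine ⟨⟨α * (2 * m 0 / √2 ^ (α + 2) + 2 * m 0 / 2 ^ (α + 2)), fun k => ?_⟩, ?_⟩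
    · refine (squareVertex_balance_iff α φ m k _).2 ⟨by rw [hconst, hconst (k + 3)], ?_⟩
      rw [hconst (k + 1), hconst (k + 2), hconst (k + 3), mul_div_cancel_left₀ _ hα.ne']
      ring
    · simp_rw [hconst, ← mul_sum]
      rw [show (∑ j, q j) = 0 from sum_squareVertex φ, mul_zero]

theorem stmt_19 (α : ℝ) (hα : 0 < α) (φ : ℝ) (m : Fin 4 → ℝ) (hm : ∀ j, 0 < m j) :
    let q : Fin 4 → ℂ := fun j =>
      Complex.exp ((φ + ((j : ℕ) + 1) * Real.pi / 2) * Complex.I)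
    ((∃ lam : ℝ, ∀ k : Fin 4,
        ∑ j ∈ Finset.univ.erase k,
          (m j : ℂ) * (q j - q k) / ((‖q j - q k‖ ^ (α + 2) : ℝ) : ℂ)
        = -(↑(lam / α) : ℂ) * q k) ∧
      (∑ j, (m j : ℂ) * q j) = 0)
    ↔ (m 0 = m 1 ∧ m 1 = m 2 ∧ m 2 = m 3) :=
  stmt_19_general α hα φ m
end
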